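/- For the translation surface z = c(u^{4/3} − v^{4/3}) with c ≠ 0, u, v > 0 (i.e., α(u) = (4c/3)u^{1/3}, β(v) = −(4c/3)v^{1/3}), the second Gaussian curvature numerator expression num (as given) vanishes identically. -/
import Mathlib


/-- Numerator of the second Gaussian curvature `K_II = num/(4Δ^{3/2})` of the translation
surface with `α = f'`, `β = g'`. -/
noncomputable def numKII (α β : ℝ → ℝ) (u v : ℝ) : ℝ :=
  -2 * α u ^ 2 * deriv α u ^ 2 * deriv β v - 2 * deriv α u * β v ^ 2 * deriv β v ^ 2 +
    2 * α u ^ 2 * deriv α u * deriv β v ^ 2 + 2 * deriv α u ^ 2 * β v ^ 2 * deriv β v +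
    2 * deriv α u * deriv β v ^ 2 + 2 * deriv α u ^ 2 * deriv β v +
    deriv α u * β v * deriv (deriv β) v + α u * deriv (deriv α) u * deriv β v +
    α u ^ 2 * deriv α u * β v * deriv (deriv β) v +
    α u * deriv (deriv α) u * β v ^ 2 * deriv β v +
    deriv α u * β v ^ 3 * deriv (deriv β) v + α u ^ 3 * deriv (deriv α) u * deriv β v

private lemma deriv_pow_aux (k p : ℝ) {u : ℝ} (hu : u ≠ 0) :
    deriv (fun x : ℝ => k * x ^ p) u = k * p * u ^ (p - 1) := by
  have h := ((Real.hasDerivAt_rpow_const (p := p) (Or.inl hu)).const_mul k).deriv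
  rw [h]; ring

private lemma deriv2_pow_aux (k p : ℝ) {u : ℝ} (hu : 0 < u) :
    deriv (deriv (fun x : ℝ => k * x ^ p)) u = k * p * (p - 1) * u ^ (p - 2) := by
  have hev : deriv (fun x : ℝ => k * x ^ p) =ᶠ[nhds u]
      (fun x : ℝ => (k * p) * x ^ (p - 1)) := by
    filter_upwards [eventually_ne_nhds hu.ne'] with x hx
    exact deriv_pow_aux k p hx
  rw [hev.deriv_eq, deriv_pow_aux (k * p) (p - 1) hu.ne']
  ring_nf

set_option maxHeartbeats 1000000 in
/-- For the translation surface `z = c(u^{4/3} − v^{4/3})` with `c ≠ 0` and `u, v > 0`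
(so `α(u) = (4c/3)u^{1/3}`, `β(v) = −(4c/3)v^{1/3}`), the second Gaussian curvature
numerator vanishes identically. -/
theorem stmt_14 (c : ℝ) (hc : c ≠ 0) :
    let α : ℝ → ℝ := fun u => (4 * c / 3) * u ^ ((1 : ℝ) / 3)
    let β : ℝ → ℝ := fun v => -(4 * c / 3) * v ^ ((1 : ℝ) / 3)
    ∀ u v : ℝ, 0 < u → 0 < v → numKII α β u v = 0 := by
  intro α β u v hu hv
  have hU : (0:ℝ) < u ^ ((1:ℝ)/3) := Real.rpow_pos_of_pos hu _
  have hV : (0:ℝ) < v ^ ((1:ℝ)/3) := Real.rpow_pos_of_pos hv _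
  have hu2 : u ^ ((1:ℝ)/3 - 1) = ((u ^ ((1:ℝ)/3)) ^ 2)⁻¹ := by
    rw [show (1:ℝ)/3 - 1 = -((1/3) * 2) by ring, Real.rpow_neg hu.le,
      Real.rpow_mul hu.le, Real.rpow_two]
  have hu5 : u ^ ((1:ℝ)/3 - 2) = ((u ^ ((1:ℝ)/3)) ^ 5)⁻¹ := by
    rw [show (1:ℝ)/3 - 2 = -((1/3) * 5) by ring, Real.rpow_neg hu.le,
      Real.rpow_mul hu.le, show ((5:ℝ) = ((5:ℕ):ℝ)) by norm_num, Real.rpow_natCast]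
  have hv2 : v ^ ((1:ℝ)/3 - 1) = ((v ^ ((1:ℝ)/3)) ^ 2)⁻¹ := by
    rw [show (1:ℝ)/3 - 1 = -((1/3) * 2) by ring, Real.rpow_neg hv.le,
      Real.rpow_mul hv.le, Real.rpow_two]
  have hv5 : v ^ ((1:ℝ)/3 - 2) = ((v ^ ((1:ℝ)/3)) ^ 5)⁻¹ := by
    rw [show (1:ℝ)/3 - 2 = -((1/3) * 5) by ring, Real.rpow_neg hv.le,
      Real.rpow_mul hv.le, show ((5:ℝ) = ((5:ℕ):ℝ)) by norm_num, Real.rpow_natCast]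
  have hα1 : deriv α u = (4 * c / 3) * (1/3) * u ^ ((1:ℝ)/3 - 1) :=
    deriv_pow_aux _ _ hu.ne'
  have hα2 : deriv (deriv α) u = (4 * c / 3) * (1/3) * ((1:ℝ)/3 - 1) * u ^ ((1:ℝ)/3 - 2) :=
    deriv2_pow_aux _ _ hu
  have hβ1 : deriv β v = (-(4 * c / 3)) * (1/3) * v ^ ((1:ℝ)/3 - 1) :=
    deriv_pow_aux _ _ hv.ne'
  have hβ2 : deriv (deriv β) v = (-(4 * c / 3)) * (1/3) * ((1:ℝ)/3 - 1) * v ^ ((1:ℝ)/3 - 2) :=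
    deriv2_pow_aux _ _ hv
  have hA : α u = (4 * c / 3) * u ^ ((1:ℝ)/3) := rfl
  have hB : β v = -(4 * c / 3) * v ^ ((1:ℝ)/3) := rfl
  rw [numKII, hA, hB, hα1, hα2, hβ1, hβ2, hu2, hu5, hv2, hv5]
  field_simp
  ring
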